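/- arXiv:2208.07781 — 2 statements merged into one kernel-verified Lean document; each statement's English description precedes it below -/
import Mathlib

section
/- Let q be an odd prime power, d ≥ 1, E ⊆ F_q^d, and a > 1 a real number. Then the set Y = {y ∈ F_q^d : Σ_{t ∈ F_q} ν_y(t)^2 ≤ (a/q)|E|^2 + (a(q-1)/q)|E|} satisfies |Y| ≥ ((a-1)/a) q^d. -/
open Finset


lemma fiber_card {F : Type*} [Field F] [Fintype F] [DecidableEq F] {d : ℕ}
    (c : Fin d → F) (hc : c ≠ 0) (b : F) :
    (Finset.univ.filter (fun y : Fin d → F => ∑ i, c i * y i = b)).card * Fintype.card F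
      = Fintype.card F ^ d := by
  obtain ⟨i, hi⟩ := Function.ne_iff.mp hc
  simp only [Pi.zero_apply] at hi
  set S : F → Finset (Fin d → F) :=
    fun b => Finset.univ.filter (fun y : Fin d → F => ∑ i, c i * y i = b) with hS
  set z : F → (Fin d → F) := fun b => Pi.single i (b / c i) with hzdef
  have hz : ∀ b, ∑ j, c j * z b j = b := by
    intro b
    simp [hzdef, Pi.single_apply, mul_ite, Finset.sum_ite_eq', mul_div_cancel₀ _ hi]
  have heq : ∀ b', (S b').card = (S b).card := by
    intro b'
    apply Finset.card_bij' (fun y _ => y - z b' + z b) (fun y _ => y - z b + z b')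
    · intro y hy
      simp only [hS, Finset.mem_filter, Finset.mem_univ, true_and] at hy ⊢
      simp [mul_add, mul_sub, Finset.sum_add_distrib, Finset.sum_sub_distrib, hy, hz]
    · intro y hy
      simp only [hS, Finset.mem_filter, Finset.mem_univ, true_and] at hy ⊢
      simp [mul_add, mul_sub, Finset.sum_add_distrib, Finset.sum_sub_distrib, hy, hz]
    · intro y _; abel
    · intro y _; abel
  have hcard : Fintype.card F ^ d = ∑ b' : F, (S b').card := by
    have := Finset.card_eq_sum_card_fiberwise
      (f := fun y : Fin d → F => ∑ i, c i * y i) (s := Finset.univ) (t := Finset.univ)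
      (fun x _ => Finset.mem_univ _)
    simpa [hS, Finset.card_univ, Fintype.card_pi] using this
  rw [hcard]
  simp only [heq]
  rw [Finset.sum_const, Finset.card_univ, smul_eq_mul, mul_comm]

lemma pair_count {F : Type*} [Field F] [Fintype F] [DecidableEq F] {d : ℕ}
    (h2 : (2 : F) ≠ 0) (x x' : Fin d → F) :
    (Finset.univ.filter (fun y : Fin d → F =>
        ∑ i, (x i - y i) ^ 2 = ∑ i, (x' i - y i) ^ 2)).card * Fintype.card F
      = if x = x' then Fintype.card F ^ (d + 1) else Fintype.card F ^ d := by
  by_cases hxx : x = x'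
  · subst hxx
    rw [if_pos rfl]
    have : (Finset.univ.filter (fun y : Fin d → F =>
        ∑ i, (x i - y i) ^ 2 = ∑ i, (x i - y i) ^ 2)) = Finset.univ :=
      Finset.filter_true_of_mem (fun _ _ => rfl)
    rw [this, Finset.card_univ, Fintype.card_pi]
    simp [pow_succ]
  · rw [if_neg hxx]
    have hcongr : (Finset.univ.filter (fun y : Fin d → F =>
        ∑ i, (x i - y i) ^ 2 = ∑ i, (x' i - y i) ^ 2))
        = Finset.univ.filter (fun y : Fin d → F =>
          ∑ i, (2 * (x' i - x i)) * y i = ∑ i, (x' i ^ 2 - x i ^ 2)) := by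
      apply Finset.filter_congr
      intro y _
      rw [← sub_eq_zero, ← Finset.sum_sub_distrib,
        ← sub_eq_zero (a := ∑ i, (2 * (x' i - x i)) * y i), ← Finset.sum_sub_distrib]
      have hsum : ∀ i : Fin d, (x i - y i) ^ 2 - (x' i - y i) ^ 2
          = (2 * (x' i - x i)) * y i - (x' i ^ 2 - x i ^ 2) := by
        intro i; ring
      rw [Finset.sum_congr rfl (fun i _ => hsum i)]
    rw [hcongr]
    apply fiber_card
    intro hc
    obtain ⟨i, hi⟩ := Function.ne_iff.mp hxx
    have := congrFun hc i
    simp only [Pi.zero_apply] at this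
    rcases mul_eq_zero.mp this with h | h
    · exact h2 h
    · exact hi (by linear_combination -h)


lemma key2' {F : Type*} [Field F] [Fintype F] [DecidableEq F] {d : ℕ}
    (E : Finset (Fin d → F)) :
    (∑ y : Fin d → F, ∑ t : F, ((E.filter (fun x => ∑ i, (x i - y i) ^ 2 = t)).card) ^ 2)
      = ∑ x ∈ E, ∑ x' ∈ E,
        (Finset.univ.filter (fun y : Fin d → F =>
          ∑ i, (x i - y i) ^ 2 = ∑ i, (x' i - y i) ^ 2)).card := by
  have key1 : ∀ y : Fin d → F,
      (∑ t : F, ((E.filter (fun x => ∑ i, (x i - y i) ^ 2 = t)).card) ^ 2)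
        = ∑ x ∈ E, ∑ x' ∈ E,
          (if ∑ i, (x i - y i) ^ 2 = ∑ i, (x' i - y i) ^ 2 then 1 else 0) := by
    intro y
    simp_rw [Finset.card_filter, sq, Finset.sum_mul_sum]
    rw [Finset.sum_comm]
    refine Finset.sum_congr rfl (fun x _ => ?_)
    rw [Finset.sum_comm]
    refine Finset.sum_congr rfl (fun x' _ => ?_)
    simp [ite_and, eq_comm, Finset.sum_ite_eq]
  simp_rw [key1]
  rw [Finset.sum_comm]
  refine Finset.sum_congr rfl (fun x _ => ?_)
  rw [Finset.sum_comm]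
  refine Finset.sum_congr rfl (fun x' _ => ?_)
  rw [Finset.card_filter]

theorem good_pins_card (q d : ℕ) (F : Type*) [Field F] [Fintype F] [DecidableEq F]
    (hq : Fintype.card F = q) (hodd : Odd q) (hd : 1 ≤ d)
    (E : Finset (Fin d → F)) (a : ℝ) (ha : 1 < a) :
    (((Finset.univ.filter (fun y : Fin d → F =>
      (∑ t : F, ((E.filter (fun x => ∑ i, (x i - y i) ^ 2 = t)).card : ℝ) ^ 2)
        ≤ a / q * E.card ^ 2 + a * (q - 1) / q * E.card)).card : ℝ))
      ≥ (a - 1) / a * q ^ d := by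
  classical
  have hq0 : 0 < q := hq ▸ Fintype.card_pos
  have hqR : (0 : ℝ) < (q : ℝ) := by exact_mod_cast hq0
  have ha0 : (0 : ℝ) < a := by linarith
  have hqd : ((Fintype.card (Fin d → F) : ℝ)) = (q : ℝ) ^ d := by
    rw [Fintype.card_pi]; push_cast [hq]; simp
  -- the "bad" set
  set P : (Fin d → F) → Prop := fun y =>
      (∑ t : F, ((E.filter (fun x => ∑ i, (x i - y i) ^ 2 = t)).card : ℝ) ^ 2)
        ≤ a / q * E.card ^ 2 + a * (q - 1) / q * E.card with hP
  have hsplit : (Finset.univ.filter P).card + (Finset.univ.filter (fun y => ¬ P y)).card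
      = Fintype.card (Fin d → F) := by
    rw [Finset.card_filter_add_card_filter_not, Finset.card_univ]
  by_cases hE : E = ∅
  · subst hE
    have : Finset.univ.filter P = Finset.univ := by
      apply Finset.filter_true_of_mem
      intro y _
      simp [hP, hqR.le]
    rw [this, Finset.card_univ]
    rw [hqd]
    have h1 : (a - 1) / a ≤ 1 := by
      rw [div_le_one ha0]; linarith
    nlinarith [pow_pos hqR d]
  -- main case
  have hE1 : (1 : ℝ) ≤ (E.card : ℝ) := by
    have := Finset.card_pos.mpr (Finset.nonempty_of_ne_empty hE)
    exact_mod_cast this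
  have h2 : (2 : F) ≠ 0 := by
    apply Ring.two_ne_zero
    intro hc
    have := FiniteField.even_card_of_char_two hc
    rw [hq] at this
    have hodd' : q % 2 = 1 := Nat.odd_iff.mp hodd
    omega
  -- total sum identity over ℝ
  set g : (Fin d → F) → ℝ := fun y =>
    ∑ t : F, ((E.filter (fun x => ∑ i, (x i - y i) ^ 2 = t)).card : ℝ) ^ 2 with hg
  have hgnn : ∀ y, 0 ≤ g y := fun y => Finset.sum_nonneg (fun t _ => sq_nonneg _)
  have hT : (∑ y : Fin d → F, g y) * q
      = (q : ℝ) ^ d * ((E.card : ℝ) ^ 2 + (E.card : ℝ) * ((q : ℝ) - 1)) := by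
    have hcast : (∑ y : Fin d → F, g y)
        = ((∑ y : Fin d → F, ∑ t : F,
            ((E.filter (fun x => ∑ i, (x i - y i) ^ 2 = t)).card) ^ 2 : ℕ) : ℝ) := by
      push_cast [hg]; rfl
    rw [hcast, key2' E]
    push_cast
    rw [Finset.sum_mul]
    have hstep : ∀ x ∈ E, (∑ x' ∈ E, ((Finset.univ.filter (fun y : Fin d → F =>
        ∑ i, (x i - y i) ^ 2 = ∑ i, (x' i - y i) ^ 2)).card : ℝ)) * q
        = ∑ x' ∈ E, (if x = x' then ((q : ℝ)) ^ (d + 1) else (q : ℝ) ^ d) := by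
      intro x _
      rw [Finset.sum_mul]
      refine Finset.sum_congr rfl (fun x' _ => ?_)
      have := pair_count h2 x x'
      have hcast2 : (((Finset.univ.filter (fun y : Fin d → F =>
          ∑ i, (x i - y i) ^ 2 = ∑ i, (x' i - y i) ^ 2)).card : ℝ)) * (Fintype.card F : ℝ)
          = if x = x' then ((Fintype.card F : ℝ)) ^ (d + 1) else (Fintype.card F : ℝ) ^ d := by
        exact_mod_cast congrArg (fun m : ℕ => (m : ℝ)) this
      rw [hq] at hcast2
      exact hcast2
    rw [Finset.sum_congr rfl hstep]
    have hinner : ∀ x ∈ E, (∑ x' ∈ E, (if x = x' then ((q : ℝ)) ^ (d + 1) else (q : ℝ) ^ d))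
        = (E.card : ℝ) * (q : ℝ) ^ d + ((q : ℝ) ^ (d + 1) - (q : ℝ) ^ d) := by
      intro x hx
      have : ∀ x' ∈ E, (if x = x' then ((q : ℝ)) ^ (d + 1) else (q : ℝ) ^ d)
          = (q : ℝ) ^ d + (if x = x' then ((q : ℝ)) ^ (d + 1) - (q : ℝ) ^ d else 0) := by
        intro x' _
        split <;> ring
      rw [Finset.sum_congr rfl this, Finset.sum_add_distrib, Finset.sum_const,
        Finset.sum_ite_eq, if_pos hx]
      simp [mul_comm]
    rw [Finset.sum_congr rfl hinner, Finset.sum_const]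
    simp only [smul_eq_mul, pow_succ]
    ring
  -- bound on bad set
  set B := Finset.univ.filter (fun y => ¬ P y) with hB
  have hBsum : (B.card : ℝ) * (a / q * ((E.card : ℝ) ^ 2 + (E.card : ℝ) * ((q : ℝ) - 1)))
      ≤ ∑ y : Fin d → F, g y := by
    have h1 : ∀ y ∈ B, a / q * ((E.card : ℝ) ^ 2 + (E.card : ℝ) * ((q : ℝ) - 1)) ≤ g y := by
      intro y hy
      rw [hB, Finset.mem_filter] at hy
      have hgt := hy.2
      rw [hP] at hgt
      have heq : a / q * (E.card : ℝ) ^ 2 + a * ((q : ℝ) - 1) / q * (E.card : ℝ)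
          = a / q * ((E.card : ℝ) ^ 2 + (E.card : ℝ) * ((q : ℝ) - 1)) := by
        field_simp
      rw [heq] at hgt
      exact le_of_lt (not_le.mp hgt)
    calc (B.card : ℝ) * (a / q * ((E.card : ℝ) ^ 2 + (E.card : ℝ) * ((q : ℝ) - 1)))
        ≤ ∑ y ∈ B, g y := by
          simpa [nsmul_eq_mul] using Finset.card_nsmul_le_sum B g _ h1
      _ ≤ ∑ y : Fin d → F, g y :=
          Finset.sum_le_sum_of_subset_of_nonneg (Finset.subset_univ B)
            (fun y _ _ => hgnn y)
  have hq1 : (1:ℝ) ≤ (q:ℝ) := by exact_mod_cast hq0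
  have hK : (0:ℝ) < (E.card:ℝ)^2 + (E.card:ℝ)*((q:ℝ)-1) := by nlinarith
  have hBle : (B.card : ℝ) * a ≤ (q:ℝ)^d := by
    have h3 := mul_le_mul_of_nonneg_right hBsum (le_of_lt hqR)
    rw [hT] at h3
    have h4 : (B.card:ℝ) * a * ((E.card:ℝ)^2 + (E.card:ℝ)*((q:ℝ)-1))
        ≤ (q:ℝ)^d * ((E.card:ℝ)^2 + (E.card:ℝ)*((q:ℝ)-1)) := by
      calc (B.card:ℝ) * a * ((E.card:ℝ)^2 + (E.card:ℝ)*((q:ℝ)-1))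
          = (B.card : ℝ) * (a / q * ((E.card : ℝ) ^ 2 + (E.card : ℝ) * ((q : ℝ) - 1))) * q := by
            field_simp
        _ ≤ _ := h3
    exact le_of_mul_le_mul_right h4 hK
  have hcast : ((Finset.univ.filter P).card : ℝ) + (B.card : ℝ) = (q:ℝ)^d := by
    have := congrArg (fun m : ℕ => (m : ℝ)) hsplit
    push_cast at this
    rw [hqd] at this
    exact_mod_cast this
  rw [ge_iff_le, div_mul_eq_mul_div, div_le_iff₀ ha0]
  nlinarith [pow_pos hqR d]
end

section
/- Let q be an odd prime power, d ≥ 1, E ⊆ F_q^d nonempty, and a > 1 a real number. Then there exists Y ⊆ F_q^d with |Y| ≥ ((a-1)/a) q^d such that for every y ∈ Y, the pinned distance set Δ_y(E) = {||x-y|| : x ∈ E} satisfies |Δ_y(E)| ≥ min{q/(2a), |E|/(2a)}. -/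
/-!
For a pin `y` let `e(y)` be the number of pairs `(x, x') ∈ E²` with `‖x - y‖ = ‖x' - y‖`.
Cauchy–Schwarz over the fibres of `x ↦ ‖x - y‖` gives `|E|² ≤ |Δ_y(E)| e(y)`. Summing `e` over
all pins, a diagonal pair contributes `q^d`, while for `x ≠ x'` the pins equidistant from `x` and
`x'` form an affine hyperplane (here `q` odd is needed), so `q Σ_y e(y) ≤ |E| q^d (q + |E|)`.
By Markov's inequality all but `q^d / a` pins have `e(y) ≤ a |E| (q + |E|) / q`, and for those
`|Δ_y(E)| ≥ q |E| / (a (q + |E|)) ≥ min(q, |E|) / (2a)`.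
-/

open Finset

lemma Finset.sq_card_le_card_image_mul_card_collisions {α β : Type*} [DecidableEq α]
    [DecidableEq β] (s : Finset α) (f : α → β) :
    #s ^ 2 ≤ #(s.image f) * #{p ∈ s ×ˢ s | f p.1 = f p.2} := by
  have hcollisions : #{p ∈ s ×ˢ s | f p.1 = f p.2} = ∑ b ∈ s.image f, #{x ∈ s | f x = b} ^ 2 := by
    rw [card_eq_sum_card_fiberwise (f := fun p => f p.1) fun p hp => by
      simp only [coe_filter, mem_product, Set.mem_ofPred_eq] at hp
      exact mem_image_of_mem f hp.1.1]
    refine sum_congr rfl fun b _ => ?_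
    rw [sq, ← card_product, filter_filter]
    congr 1
    ext p
    simp only [mem_filter, mem_product]
    grind
  rw [hcollisions, card_eq_sum_card_image f s]
  exact sq_sum_le_card_mul_sum_sq

lemma AddMonoidHom.card_fiber_mul_card {G H : Type*} [AddGroup G] [Fintype G] [AddGroup H]
    [Fintype H] [DecidableEq H] (f : G →+ H) (hf : Function.Surjective f) (h : H) :
    #{g | f g = h} * Fintype.card H = Fintype.card G := by
  calc #{g | f g = h} * Fintype.card H = ∑ h', #{g | f g = h'} := by
        rw [sum_congr rfl fun h' _ => card_fiber_eq_of_mem_range f (hf h') (hf h), sum_const,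
          card_univ, smul_eq_mul, mul_comm]
    _ = Fintype.card G := by
        rw [← card_univ, card_eq_sum_card_fiberwise fun g _ => mem_univ (f g)]

lemma Finset.card_sub_sum_div_le_card_filter_le {α : Type*} {s : Finset α} {g : α → ℝ}
    (hg : ∀ x ∈ s, 0 ≤ g x) {t : ℝ} (ht : 0 < t) :
    #s - (∑ x ∈ s, g x) / t ≤ #{x ∈ s | g x ≤ t} := by
  have hbad : #{x ∈ s | ¬ g x ≤ t} * t ≤ ∑ x ∈ s, g x := by
    calc #{x ∈ s | ¬ g x ≤ t} * t ≤ ∑ x ∈ s with ¬ g x ≤ t, g x := by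
          simpa using card_nsmul_le_sum _ g t fun x hx => (not_le.mp (mem_filter.mp hx).2).le
      _ ≤ ∑ x ∈ s, g x := sum_le_sum_of_subset_of_nonneg (filter_subset _ _)
          fun x hx _ => hg x hx
  have hsplit : (#s : ℝ) = #{x ∈ s | g x ≤ t} + #{x ∈ s | ¬ g x ≤ t} := by
    exact_mod_cast (card_filter_add_card_filter_not (fun x => g x ≤ t)).symm
  linarith [(le_div_iff₀ ht).mpr hbad]

lemma sum_sub_sq_eq_sum_sub_sq_iff {R ι : Type*} [CommRing R] [Fintype ι] (x x' y : ι → R) :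
    ∑ i, (x i - y i) ^ 2 = ∑ i, (x' i - y i) ^ 2 ↔
      (fun i => 2 * (x' i - x i)) ⬝ᵥ y = ∑ i, (x' i ^ 2 - x i ^ 2) := by
  have hdiff : ∑ i, (x i - y i) ^ 2 - ∑ i, (x' i - y i) ^ 2 =
      (fun i => 2 * (x' i - x i)) ⬝ᵥ y - ∑ i, (x' i ^ 2 - x i ^ 2) := by
    simp only [dotProduct, ← sum_sub_distrib]
    exact sum_congr rfl fun i _ => by ring
  rw [← sub_eq_zero, hdiff, sub_eq_zero]

lemma min_div_le_of_mul_le_mul_add {q n D a : ℝ} (hq : 0 < q) (hn : 0 < n) (ha : 0 < a)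
    (h : q * n ≤ a * D * (q + n)) : min (q / (2 * a)) (n / (2 * a)) ≤ D := by
  rw [min_div_div_right (by positivity), div_le_iff₀ (by positivity)]
  rcases le_total q n with hqn | hnq
  · rw [min_eq_left hqn]
    nlinarith
  · rw [min_eq_right hnq]
    nlinarith

section PinnedEnergy

variable {F ι : Type*} [Field F] [Fintype F] [DecidableEq F] [Fintype ι]

def pinnedEnergy (E : Finset (ι → F)) (y : ι → F) : ℕ :=
  #{p ∈ E ×ˢ E | ∑ i, (p.1 i - y i) ^ 2 = ∑ i, (p.2 i - y i) ^ 2}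

lemma min_div_le_card_image_of_pinnedEnergy_le {E : Finset (ι → F)} (hE : E.Nonempty) {a : ℝ}
    (ha : 0 < a) {y : ι → F}
    (hy : (pinnedEnergy E y : ℝ) ≤ a * #E * (Fintype.card F + #E) / Fintype.card F) :
    min ((Fintype.card F : ℝ) / (2 * a)) (#E / (2 * a)) ≤
      #(E.image fun x => ∑ i, (x i - y i) ^ 2) := by
  set q : ℝ := (Fintype.card F : ℝ)
  set n : ℝ := (E.card : ℝ)
  set D : ℝ := ((E.image fun x => ∑ i, (x i - y i) ^ 2).card : ℝ)
  have hq : 0 < q := Nat.cast_pos.mpr Fintype.card_pos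
  have hn : 0 < n := Nat.cast_pos.mpr hE.card_pos
  have hCS : n ^ 2 ≤ D * pinnedEnergy E y := by
    have hCS : #E ^ 2 ≤ #(E.image fun x => ∑ i, (x i - y i) ^ 2) * pinnedEnergy E y :=
      sq_card_le_card_image_mul_card_collisions E _
    simpa only [Nat.cast_pow, Nat.cast_mul] using (Nat.cast_le (α := ℝ)).mpr hCS
  refine min_div_le_of_mul_le_mul_add hq hn ha (le_of_mul_le_mul_left ?_ hn)
  calc n * (q * n) = q * n ^ 2 := by ring
    _ ≤ q * (D * (a * n * (q + n) / q)) := by gcongr; exact hCS.trans (by gcongr)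
    _ = n * (a * D * (q + n)) := by field_simp

variable [DecidableEq ι]

lemma card_dotProduct_eq_mul_card {b : ι → F} (hb : b ≠ 0) (c : F) :
    #{y : ι → F | b ⬝ᵥ y = c} * Fintype.card F = Fintype.card F ^ Fintype.card ι := by
  obtain ⟨i, hi⟩ := Function.ne_iff.mp hb
  let ℓ : (ι → F) →+ F := AddMonoidHom.mk' (b ⬝ᵥ ·) (dotProduct_add b)
  have hℓ : Function.Surjective ℓ := fun c =>
    ⟨Pi.single i (c / b i), by simp [ℓ, dotProduct_single, mul_div_cancel₀ _ hi]⟩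
  rw [← Fintype.card_fun]
  exact ℓ.card_fiber_mul_card hℓ c

lemma card_bisector_mul_card (h2 : (2 : F) ≠ 0) {x x' : ι → F} (hxx' : x ≠ x') :
    #{y : ι → F | ∑ i, (x i - y i) ^ 2 = ∑ i, (x' i - y i) ^ 2} * Fintype.card F
      = Fintype.card F ^ Fintype.card ι := by
  have hnormal : (fun i => 2 * (x' i - x i)) ≠ 0 := fun h => hxx' <| funext fun i => by
    simpa [h2, sub_eq_zero, eq_comm] using congrFun h i
  simp_rw [sum_sub_sq_eq_sum_sub_sq_iff]
  exact card_dotProduct_eq_mul_card hnormal _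

lemma card_mul_sum_pinnedEnergy_le (h2 : (2 : F) ≠ 0) (E : Finset (ι → F)) :
    Fintype.card F * ∑ y, pinnedEnergy E y
      ≤ #E * Fintype.card F ^ Fintype.card ι * (Fintype.card F + #E) := by
  set q := Fintype.card F
  set N := q ^ Fintype.card ι
  let pins (p : (ι → F) × (ι → F)) : ℕ :=
    #{y : ι → F | ∑ i, (p.1 i - y i) ^ 2 = ∑ i, (p.2 i - y i) ^ 2}
  have hswap : ∑ y, pinnedEnergy E y = ∑ p ∈ E ×ˢ E, pins p := by
    simp only [pinnedEnergy, pins, card_filter]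
    exact sum_comm
  have hdiag : ∀ p ∈ E.diag, pins p = N := fun ⟨x, x'⟩ hp => by
    obtain ⟨-, rfl : x = x'⟩ := mem_diag.mp hp
    simp [pins, N, q]
  have hoffDiag : ∀ p ∈ E.offDiag, q * pins p = N := fun p hp => by
    rw [mul_comm]
    exact card_bisector_mul_card h2 (mem_offDiag.mp hp).2.2
  calc q * ∑ y, pinnedEnergy E y
      = q * ∑ p ∈ E.diag, pins p + ∑ p ∈ E.offDiag, q * pins p := by
        rw [hswap, ← diag_union_offDiag, sum_union (disjoint_diag_offDiag E), mul_add,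
          mul_sum E.offDiag]
    _ = q * (#E * N) + #E.offDiag * N := by
        rw [sum_congr rfl hdiag, sum_congr rfl hoffDiag, sum_const, sum_const, diag_card]
        rfl
    _ ≤ q * (#E * N) + #E ^ 2 * N := by
        gcongr
        rw [offDiag_card, sq]
        exact Nat.sub_le _ _
    _ = #E * N * (q + #E) := by ring

lemma le_card_filter_pinnedEnergy_le (h2 : (2 : F) ≠ 0) {E : Finset (ι → F)} (hE : E.Nonempty)
    {a : ℝ} (ha : 0 < a) :
    (a - 1) / a * Fintype.card F ^ Fintype.card ι ≤
      #{y | (pinnedEnergy E y : ℝ) ≤ a * #E * (Fintype.card F + #E) / Fintype.card F} := by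
  have henergy : (Fintype.card F : ℝ) * ∑ y, (pinnedEnergy E y : ℝ) ≤
      #E * (Fintype.card F : ℝ) ^ Fintype.card ι * (Fintype.card F + #E) := by
    exact_mod_cast card_mul_sum_pinnedEnergy_le h2 E
  set q : ℝ := (Fintype.card F : ℝ)
  set n : ℝ := (E.card : ℝ)
  have hq : 0 < q := Nat.cast_pos.mpr Fintype.card_pos
  have hn : 0 < n := Nat.cast_pos.mpr hE.card_pos
  calc (a - 1) / a * q ^ Fintype.card ι
      = q ^ Fintype.card ι - n * q ^ Fintype.card ι * (q + n) / q / (a * n * (q + n) / q) := by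
        field_simp
    _ ≤ #(univ : Finset (ι → F)) - (∑ y, (pinnedEnergy E y : ℝ)) / (a * n * (q + n) / q) := by
        rw [card_univ, Fintype.card_fun]
        push_cast
        gcongr
        rwa [le_div_iff₀ hq, mul_comm]
    _ ≤ _ := card_sub_sum_div_le_card_filter_le (fun _ _ => Nat.cast_nonneg _) (by positivity)

end PinnedEnergy

theorem main_pinned_distance_general (q d : ℕ) (F : Type*) [Field F] [Fintype F] [DecidableEq F]
    (hq : Fintype.card F = q) (hodd : Odd q)
    (E : Finset (Fin d → F)) (hE : E.Nonempty) (a : ℝ) (ha : 1 < a) :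
    ∃ Y : Finset (Fin d → F), ((Y.card : ℝ) ≥ (a - 1) / a * q ^ d) ∧
      ∀ y ∈ Y, ((E.image (fun x => ∑ i, (x i - y i) ^ 2)).card : ℝ)
        ≥ min ((q : ℝ) / (2 * a)) ((E.card : ℝ) / (2 * a)) := by
  subst hq
  have h2 : (2 : F) ≠ 0 := Ring.two_ne_zero fun hchar => by
    simpa [Nat.odd_iff.mp hodd] using FiniteField.even_card_of_char_two hchar
  have ha0 : 0 < a := by linarith
  refine ⟨({y | (pinnedEnergy E y : ℝ) ≤ a * #E * (Fintype.card F + #E) / Fintype.card F} :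
    Finset _), ?_, fun y hy => ?_⟩
  · simpa using le_card_filter_pinnedEnergy_le h2 hE ha0
  · exact min_div_le_card_image_of_pinnedEnergy_le hE ha0 (mem_filter.mp hy).2

theorem main_pinned_distance (q d : ℕ) (F : Type*) [Field F] [Fintype F] [DecidableEq F]
    (hq : Fintype.card F = q) (hodd : Odd q) (hd : 1 ≤ d)
    (E : Finset (Fin d → F)) (hE : E.Nonempty) (a : ℝ) (ha : 1 < a) :
    ∃ Y : Finset (Fin d → F), ((Y.card : ℝ) ≥ (a - 1) / a * q ^ d) ∧
      ∀ y ∈ Y, ((E.image (fun x => ∑ i, (x i - y i) ^ 2)).card : ℝ)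
        ≥ min ((q : ℝ) / (2 * a)) ((E.card : ℝ) / (2 * a)) :=
  main_pinned_distance_general q d F hq hodd E hE a ha
end
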